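/- For a connected graph G, the curvature vector μ defined by μ_x = 1 − (1/2)·Σ_{e incident to x} r(e⁺,e⁻) satisfies Σ_{x∈V} μ_x = 1. -/

import Mathlib

open scoped Classical
open Matrix

/-- A finite multigraph without loop edges, given by endpoint maps on an edge type. -/
structure Multigraph where
  V : Type
  E : Type
  [fintV : Fintype V]
  [fintE : Fintype E]
  fst : E → V
  snd : E → V
  no_loop : ∀ e, fst e ≠ snd e

namespace Multigraph

variable (G : Multigraph)

instance : Fintype G.V := G.fintV
instance : Fintype G.E := G.fintE

/-- One step along an edge of the subgraph with edge set `S`. -/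
def step (S : Finset G.E) (u v : G.V) : Prop :=
  ∃ e ∈ S, (G.fst e = u ∧ G.snd e = v) ∨ (G.fst e = v ∧ G.snd e = u)

/-- Two vertices are in the same component of the spanning subgraph with edge set `S`. -/
def reach (S : Finset G.E) : G.V → G.V → Prop :=
  Relation.EqvGen (G.step S)

/-- Number of connected components of the spanning subgraph with edge set `S`. -/
noncomputable def ncomp (S : Finset G.E) : ℕ :=
  Nat.card (Quotient (Relation.EqvGen.setoid (G.step S)))

/-- The graph is connected. -/
def IsConnected : Prop := G.ncomp Finset.univ = 1

/-- `S` is the edge set of a spanning tree. -/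
def IsSpanningTree (S : Finset G.E) : Prop :=
  G.ncomp S = 1 ∧ S.card + 1 = Fintype.card G.V

/-- `S` is the edge set of a two-component spanning forest. -/
def IsTwoForest (S : Finset G.E) : Prop :=
  G.ncomp S = 2 ∧ S.card + 2 = Fintype.card G.V

/-- `S` is the edge set of a three-component spanning forest. -/
def IsThreeForest (S : Finset G.E) : Prop :=
  G.ncomp S = 3 ∧ S.card + 3 = Fintype.card G.V

/-- κ(G): number of spanning trees. -/
noncomputable def kappa : ℕ := Nat.card {S : Finset G.E // G.IsSpanningTree S}

/-- κ₂(G): number of two-component spanning forests. -/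
noncomputable def kappa2 : ℕ := Nat.card {S : Finset G.E // G.IsTwoForest S}

/-- κ₂(x|y): number of two-forests with `x` and `y` in different components. -/
noncomputable def kappa2Sep (x y : G.V) : ℕ :=
  Nat.card {S : Finset G.E // G.IsTwoForest S ∧ ¬ G.reach S x y}

/-- κ₂(xy|q): number of two-forests with `x`, `y` in one component, `q` in the other. -/
noncomputable def kappa2Tog (x y q : G.V) : ℕ :=
  Nat.card {S : Finset G.E // G.IsTwoForest S ∧ G.reach S x y ∧ ¬ G.reach S x q}

/-- κ₃(x|y|q): number of three-forests with `x`, `y`, `q` in pairwise distinct components. -/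
noncomputable def kappa3Sep (x y q : G.V) : ℕ :=
  Nat.card {S : Finset G.E //
    G.IsThreeForest S ∧ ¬ G.reach S x y ∧ ¬ G.reach S x q ∧ ¬ G.reach S y q}

/-- Effective resistance: r(x,y) = κ₂(x|y)/κ(G). -/
noncomputable def res (x y : G.V) : ℝ := (G.kappa2Sep x y : ℝ) / (G.kappa : ℝ)

/-- Potential kernel: j_q(x,y) = κ₂(xy|q)/κ(G). -/
noncomputable def jfun (q x y : G.V) : ℝ := (G.kappa2Tog x y q : ℝ) / (G.kappa : ℝ)

/-- Cut size |∂F| of a two-forest with edge set `S`: edges joining the two components. -/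
noncomputable def cutSize (S : Finset G.E) : ℕ :=
  Nat.card {e : G.E // ¬ G.reach S (G.fst e) (G.snd e)}

/-- The curvature vector μ. -/
noncomputable def mu (x : G.V) : ℝ :=
  1 - (1/2) * ∑ e : G.E,
    (if G.fst e = x ∨ G.snd e = x then G.res (G.fst e) (G.snd e) else 0)

/-- The Laplacian matrix of `G`. -/
noncomputable def lap : Matrix G.V G.V ℝ := fun v w =>
  (if v = w then (Nat.card {e : G.E // G.fst e = v ∨ G.snd e = v} : ℝ) else 0)
    - (Nat.card {e : G.E // (G.fst e = v ∧ G.snd e = w) ∨ (G.fst e = w ∧ G.snd e = v)} : ℝ)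

/-- The effective resistance matrix of `G`. -/
noncomputable def resMatrix : Matrix G.V G.V ℝ := fun v w => G.res v w

variable {G}

lemma reach_mono {S T : Finset G.E} (h : S ⊆ T) {u v : G.V} (huv : G.reach S u v) :
    G.reach T u v :=
  Relation.EqvGen.mono (r := G.step S) (p := G.step T) (fun a b ⟨e, he, hab⟩ => ⟨e, h he, hab⟩) _ _ huv

lemma reach_step {S : Finset G.E} {e : G.E} (he : e ∈ S) : G.reach S (G.fst e) (G.snd e) :=
  Relation.EqvGen.rel _ _ ⟨e, he, Or.inl ⟨rfl, rfl⟩⟩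

lemma reach_refl {S : Finset G.E} (u : G.V) : G.reach S u u := Relation.EqvGen.refl u
lemma reach_symm {S : Finset G.E} {u v : G.V} (h : G.reach S u v) : G.reach S v u :=
  Relation.EqvGen.symm _ _ h
lemma reach_trans {S : Finset G.E} {u v w : G.V} (h : G.reach S u v) (h2 : G.reach S v w) :
    G.reach S u w := Relation.EqvGen.trans _ _ _ h h2

lemma ncomp_congr {S T : Finset G.E} (h : G.reach S = G.reach T) : G.ncomp S = G.ncomp T := by
  unfold ncomp
  have hs : Relation.EqvGen.setoid (G.step S) = Relation.EqvGen.setoid (G.step T) := by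
    apply Setoid.ext; intro a b
    exact iff_of_eq (congrFun (congrFun h a) b)
  rw [hs]

lemma ncomp_empty : G.ncomp (∅ : Finset G.E) = Fintype.card G.V := by
  have hb : Function.Bijective (Quotient.mk (Relation.EqvGen.setoid (G.step (∅ : Finset G.E)))) := by
    constructor
    · intro a b hab
      have : G.reach ∅ a b := Quotient.exact hab
      clear hab
      induction this with
      | rel a b hab => obtain ⟨e, he, _⟩ := hab; exact absurd he (Finset.notMem_empty e)
      | refl a => rfl
      | symm a b _ ih => exact ih.symm
      | trans a b c _ _ ih1 ih2 => exact ih1.trans ih2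
    · exact Quotient.exists_rep
  unfold ncomp
  rw [← Nat.card_eq_fintype_card, Nat.card_eq_of_bijective _ hb]


lemma reach_insert_of_reach {S : Finset G.E} {e : G.E}
    (h : G.reach S (G.fst e) (G.snd e)) :
    G.reach (insert e S) = G.reach S := by
  funext u v; apply propext
  constructor
  · intro huv
    induction huv with
    | rel a b hab =>
        obtain ⟨e', he', hc⟩ := hab
        rcases Finset.mem_insert.mp he' with rfl | he'
        · rcases hc with ⟨h1, h2⟩ | ⟨h1, h2⟩
          · rw [← h1, ← h2]; exact h
          · rw [← h1, ← h2]; exact reach_symm h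
        · exact Relation.EqvGen.rel _ _ ⟨e', he', hc⟩
    | refl a => exact reach_refl a
    | symm a b _ ih => exact reach_symm ih
    | trans a b c _ _ ih1 ih2 => exact reach_trans ih1 ih2
  · exact reach_mono (Finset.subset_insert e S)

lemma reach_insert_cases {S : Finset G.E} {e : G.E}
    (hne : ¬ G.reach S (G.fst e) (G.snd e)) {u v : G.V}
    (h : G.reach (insert e S) u v) :
    G.reach S u v ∨ (G.reach S u (G.fst e) ∧ G.reach S (G.snd e) v)
      ∨ (G.reach S u (G.snd e) ∧ G.reach S (G.fst e) v) := by
  induction h with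
  | rel a b hab =>
      obtain ⟨e', he', hc⟩ := hab
      rcases Finset.mem_insert.mp he' with rfl | he'
      · rcases hc with ⟨h1, h2⟩ | ⟨h1, h2⟩
        · exact Or.inr (Or.inl ⟨h1 ▸ reach_refl _, h2 ▸ reach_refl _⟩)
        · exact Or.inr (Or.inr ⟨h2 ▸ reach_refl _, h1 ▸ reach_refl _⟩)
      · exact Or.inl (Relation.EqvGen.rel _ _ ⟨e', he', hc⟩)
  | refl a => exact Or.inl (reach_refl a)
  | symm a b _ ih =>
      rcases ih with h1 | ⟨h1, h2⟩ | ⟨h1, h2⟩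
      · exact Or.inl (reach_symm h1)
      · exact Or.inr (Or.inr ⟨reach_symm h2, reach_symm h1⟩)
      · exact Or.inr (Or.inl ⟨reach_symm h2, reach_symm h1⟩)
  | trans a b c _ _ ih1 ih2 =>
      rcases ih1 with h1 | ⟨h1, h2⟩ | ⟨h1, h2⟩ <;>
        rcases ih2 with h3 | ⟨h3, h4⟩ | ⟨h3, h4⟩
      · exact Or.inl (reach_trans h1 h3)
      · exact Or.inr (Or.inl ⟨reach_trans h1 h3, h4⟩)
      · exact Or.inr (Or.inr ⟨reach_trans h1 h3, h4⟩)
      · exact Or.inr (Or.inl ⟨h1, reach_trans h2 h3⟩)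
      · exact absurd (reach_symm (reach_trans h2 h3)) hne
      · exact Or.inl (reach_trans h1 h4)
      · exact Or.inr (Or.inr ⟨h1, reach_trans h2 h3⟩)
      · exact Or.inl (reach_trans h1 h4)
      · exact absurd (reach_trans h2 h3) hne


lemma ncomp_insert_of_not_reach {S : Finset G.E} {e : G.E}
    (hne : ¬ G.reach S (G.fst e) (G.snd e)) :
    G.ncomp (insert e S) + 1 = G.ncomp S := by
  set sS := Relation.EqvGen.setoid (G.step S) with hsS
  set sI := Relation.EqvGen.setoid (G.step (insert e S)) with hsI
  have hmono : ∀ a b : G.V, sS.r a b → sI.r a b := fun a b h =>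
    reach_mono (Finset.subset_insert e S) h
  let φ : Quotient sS → Quotient sI := Quotient.map id (fun a b h => hmono a b h)
  have hφ : ∀ u : G.V, φ ⟦u⟧ = ⟦u⟧ := fun u => rfl
  set qs : Quotient sS := ⟦G.snd e⟧ with hqs
  let ψ : {a : Quotient sS // a ≠ qs} → Quotient sI := fun a => φ a.1
  have hψbij : Function.Bijective ψ := by
    constructor
    · rintro ⟨a, ha⟩ ⟨b, hb⟩ hab
      obtain ⟨u, rfl⟩ := Quotient.exists_rep a
      obtain ⟨v, rfl⟩ := Quotient.exists_rep b
      have hr : G.reach (insert e S) u v := Quotient.exact hab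
      rcases reach_insert_cases hne hr with h1 | ⟨h1, h2⟩ | ⟨h1, h2⟩
      · exact Subtype.ext (Quotient.sound h1)
      · exact absurd (Quotient.sound (reach_symm h2) : (⟦v⟧ : Quotient sS) = qs) hb
      · exact absurd (Quotient.sound h1 : (⟦u⟧ : Quotient sS) = qs) ha
    · intro q
      obtain ⟨u, rfl⟩ := Quotient.exists_rep q
      by_cases hu : (⟦u⟧ : Quotient sS) = qs
      · refine ⟨⟨⟦G.fst e⟧, fun h => hne (Quotient.exact h)⟩, ?_⟩
        show (⟦G.fst e⟧ : Quotient sI) = ⟦u⟧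
        have h1 : G.reach S u (G.snd e) := Quotient.exact hu
        exact Quotient.sound (reach_trans (reach_step (Finset.mem_insert_self e S))
          (reach_symm (reach_mono (Finset.subset_insert e S) h1)))
      · exact ⟨⟨⟦u⟧, hu⟩, rfl⟩
  have hcard : Nat.card {a : Quotient sS // a ≠ qs} = Nat.card (Quotient sI) :=
    Nat.card_eq_of_bijective ψ hψbij
  have hfin : Fintype (Quotient sS) := Quotient.fintype sS
  have hfinI : Fintype (Quotient sI) := Quotient.fintype sI
  have h1 : Nat.card {a : Quotient sS // a ≠ qs} + 1 = Nat.card (Quotient sS) := by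
    rw [Nat.card_eq_fintype_card, Nat.card_eq_fintype_card]
    have := Fintype.card_subtype_compl (fun a : Quotient sS => a = qs)
    have h2 : Fintype.card {a : Quotient sS // a = qs} = 1 := Fintype.card_subtype_eq qs
    have h3 : Fintype.card {a : Quotient sS // a ≠ qs}
        = Fintype.card {a : Quotient sS // ¬ a = qs} := rfl
    have h4 : 1 ≤ Fintype.card (Quotient sS) := Fintype.card_pos_iff.mpr ⟨qs⟩
    omega
  show Nat.card (Quotient sI) + 1 = Nat.card (Quotient sS)
  omega


lemma ncomp_le_insert (S : Finset G.E) (e : G.E) :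
    G.ncomp S ≤ G.ncomp (insert e S) + 1 := by
  by_cases h : G.reach S (G.fst e) (G.snd e)
  · rw [ncomp_congr (reach_insert_of_reach h)]; omega
  · exact le_of_eq (ncomp_insert_of_not_reach h).symm

lemma card_add_ncomp_le (S : Finset G.E) :
    Fintype.card G.V ≤ S.card + G.ncomp S := by
  induction S using Finset.induction with
  | empty => simp [ncomp_empty]
  | @insert a S ha ih =>
      have h1 := ncomp_le_insert S a
      rw [Finset.card_insert_of_notMem ha]
      omega

lemma card_add_ncomp_of_indep (S : Finset G.E)
    (h : ∀ e ∈ S, ¬ G.reach (S.erase e) (G.fst e) (G.snd e)) :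
    S.card + G.ncomp S = Fintype.card G.V := by
  induction S using Finset.induction with
  | empty => simp [ncomp_empty]
  | @insert a S ha ih =>
      have hS : ∀ e ∈ S, ¬ G.reach (S.erase e) (G.fst e) (G.snd e) := by
        intro f hf hr
        exact h f (Finset.mem_insert_of_mem hf)
          (reach_mono (Finset.erase_subset_erase f (Finset.subset_insert a S)) hr)
      have hna : ¬ G.reach S (G.fst a) (G.snd a) := by
        have := h a (Finset.mem_insert_self a S)
        rwa [Finset.erase_insert ha] at this
      have h2 := ncomp_insert_of_not_reach hna
      have h3 := ih hS
      rw [Finset.card_insert_of_notMem ha]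
      omega

lemma exists_indep_subset (S : Finset G.E) :
    ∃ T ⊆ S, G.reach T = G.reach S ∧
      ∀ e ∈ T, ¬ G.reach (T.erase e) (G.fst e) (G.snd e) := by
  induction S using Finset.strongInduction with
  | _ S ih =>
    by_cases h : ∀ e ∈ S, ¬ G.reach (S.erase e) (G.fst e) (G.snd e)
    · exact ⟨S, subset_rfl, rfl, h⟩
    · push_neg at h
      obtain ⟨e, he, hr⟩ := h
      obtain ⟨T, hT1, hT2, hT3⟩ := ih (S.erase e) (Finset.erase_ssubset he)
      refine ⟨T, hT1.trans (Finset.erase_subset e S), ?_, hT3⟩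
      have hie : insert e (S.erase e) = S := Finset.insert_erase he
      rw [hT2, ← reach_insert_of_reach hr, hie]


lemma tree_erase {S : Finset G.E} {e : G.E} (hS : G.IsSpanningTree S) (he : e ∈ S) :
    G.IsTwoForest (S.erase e) ∧ ¬ G.reach (S.erase e) (G.fst e) (G.snd e) := by
  obtain ⟨hS1, hS2⟩ := hS
  have hcard : (S.erase e).card + 1 = S.card := by
    rw [Finset.card_erase_of_mem he]
    have : 1 ≤ S.card := Finset.card_pos.mpr ⟨e, he⟩
    omega
  have hnr : ¬ G.reach (S.erase e) (G.fst e) (G.snd e) := by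
    intro hr
    have h1 := reach_insert_of_reach hr
    rw [Finset.insert_erase he] at h1
    have h2 : G.ncomp S = G.ncomp (S.erase e) := ncomp_congr h1
    have h3 := card_add_ncomp_le (S.erase e)
    omega
  have h4 := ncomp_insert_of_not_reach hnr
  rw [Finset.insert_erase he] at h4
  exact ⟨⟨by omega, by omega⟩, hnr⟩

lemma forest_insert {F : Finset G.E} {e : G.E} (hF : G.IsTwoForest F)
    (hnr : ¬ G.reach F (G.fst e) (G.snd e)) :
    G.IsSpanningTree (insert e F) ∧ e ∉ F := by
  obtain ⟨hF1, hF2⟩ := hF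
  have heF : e ∉ F := fun h => hnr (reach_step h)
  have h1 := ncomp_insert_of_not_reach hnr
  have h2 := Finset.card_insert_of_notMem heF
  exact ⟨⟨by omega, by omega⟩, heF⟩

/-- The Foster bijection: (spanning tree, edge in it) ↔ (two-forest, separated edge). -/
noncomputable def fosterEquiv :
    {p : Finset G.E × G.E // G.IsSpanningTree p.1 ∧ p.2 ∈ p.1} ≃
    {p : Finset G.E × G.E // G.IsTwoForest p.1 ∧ ¬ G.reach p.1 (G.fst p.2) (G.snd p.2)} where
  toFun p := ⟨(p.1.1.erase p.1.2, p.1.2),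
    (tree_erase p.2.1 p.2.2).1, (tree_erase p.2.1 p.2.2).2⟩
  invFun p := ⟨(insert p.1.2 p.1.1, p.1.2),
    (forest_insert p.2.1 p.2.2).1, Finset.mem_insert_self _ _⟩
  left_inv p := Subtype.ext (Prod.ext (Finset.insert_erase p.2.2) rfl)
  right_inv p := Subtype.ext (Prod.ext (Finset.erase_insert (forest_insert p.2.1 p.2.2).2) rfl)

lemma foster_sum :
    ∑ e : G.E, G.kappa2Sep (G.fst e) (G.snd e) = (Fintype.card G.V - 1) * G.kappa := by
  have hA : Nat.card {p : Finset G.E × G.E // G.IsSpanningTree p.1 ∧ p.2 ∈ p.1}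
      = (Fintype.card G.V - 1) * G.kappa := by
    have e1 : {p : Finset G.E × G.E // G.IsSpanningTree p.1 ∧ p.2 ∈ p.1}
        ≃ Σ S : {S : Finset G.E // G.IsSpanningTree S}, {e : G.E // e ∈ S.1} :=
      { toFun := fun p => ⟨⟨p.1.1, p.2.1⟩, ⟨p.1.2, p.2.2⟩⟩
        invFun := fun x => ⟨(x.1.1, x.2.1), x.1.2, x.2.2⟩
        left_inv := fun p => rfl
        right_inv := fun x => rfl }
    rw [Nat.card_congr e1, Nat.card_eq_fintype_card, Fintype.card_sigma]
    have : ∀ S : {S : Finset G.E // G.IsSpanningTree S},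
        Fintype.card {e : G.E // e ∈ S.1} = Fintype.card G.V - 1 := by
      intro S
      rw [Fintype.card_coe]
      have := S.2.2
      omega
    rw [Finset.sum_congr rfl (fun S _ => this S), Finset.sum_const, smul_eq_mul,
      Nat.mul_comm, Finset.card_univ]
    congr 1
    rw [kappa, Nat.card_eq_fintype_card]
  have hB : Nat.card {p : Finset G.E × G.E // G.IsTwoForest p.1 ∧
      ¬ G.reach p.1 (G.fst p.2) (G.snd p.2)}
      = ∑ e : G.E, G.kappa2Sep (G.fst e) (G.snd e) := by
    have e2 : {p : Finset G.E × G.E // G.IsTwoForest p.1 ∧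
        ¬ G.reach p.1 (G.fst p.2) (G.snd p.2)}
        ≃ Σ e : G.E, {S : Finset G.E // G.IsTwoForest S ∧ ¬ G.reach S (G.fst e) (G.snd e)} :=
      { toFun := fun p => ⟨p.1.2, ⟨p.1.1, p.2⟩⟩
        invFun := fun x => ⟨(x.2.1, x.1), x.2.2⟩
        left_inv := fun p => rfl
        right_inv := fun x => rfl }
    rw [Nat.card_congr e2, Nat.card_eq_fintype_card, Fintype.card_sigma]
    apply Finset.sum_congr rfl
    intro e _
    rw [kappa2Sep, Nat.card_eq_fintype_card]
  rw [← hB, ← hA, Nat.card_congr fosterEquiv]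

lemma kappa_pos (hG : G.IsConnected) : 0 < G.kappa := by
  obtain ⟨T, _, hTr, hTi⟩ := exists_indep_subset (Finset.univ : Finset G.E)
  have h1 : G.ncomp T = 1 := by rw [ncomp_congr hTr]; exact hG
  have h2 := card_add_ncomp_of_indep T hTi
  have : Nonempty {S : Finset G.E // G.IsSpanningTree S} := ⟨⟨T, h1, by omega⟩⟩
  exact Nat.card_pos

lemma card_V_pos (hG : G.IsConnected) : 0 < Fintype.card G.V := by
  by_contra h
  have h0 : Fintype.card G.V = 0 := by omega
  have : IsEmpty G.V := Fintype.card_eq_zero_iff.mp h0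
  have : IsEmpty (Quotient (Relation.EqvGen.setoid (G.step (Finset.univ : Finset G.E)))) :=
    Quotient.instIsEmpty
  have h1 : G.ncomp Finset.univ = 0 := by
    rw [ncomp, Nat.card_of_isEmpty]
  rw [hG] at h1
  exact one_ne_zero h1

end Multigraph

theorem curvature_vector_sums_to_one (G : Multigraph) (hG : G.IsConnected) :
    ∑ x : G.V, G.mu x = 1 := by
  classical
  have hk : 0 < G.kappa := Multigraph.kappa_pos hG
  have hn : 0 < Fintype.card G.V := Multigraph.card_V_pos hG
  have hkR : (G.kappa : ℝ) ≠ 0 := Nat.cast_ne_zero.mpr hk.ne'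
  have hswap : ∑ x : G.V, ∑ e : G.E,
      (if G.fst e = x ∨ G.snd e = x then G.res (G.fst e) (G.snd e) else 0)
      = 2 * ∑ e : G.E, G.res (G.fst e) (G.snd e) := by
    rw [Finset.sum_comm, Finset.mul_sum]
    apply Finset.sum_congr rfl
    intro e _
    have hsplit : ∀ x : G.V,
        (if G.fst e = x ∨ G.snd e = x then G.res (G.fst e) (G.snd e) else 0)
        = (if G.fst e = x then G.res (G.fst e) (G.snd e) else 0)
          + (if G.snd e = x then G.res (G.fst e) (G.snd e) else 0) := by
      intro x
      by_cases h1 : G.fst e = x <;> by_cases h2 : G.snd e = x <;>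
        simp [h1, h2]
      exact absurd (h1.trans h2.symm) (G.no_loop e)
    rw [Finset.sum_congr rfl (fun x _ => hsplit x), Finset.sum_add_distrib,
      Finset.sum_ite_eq, Finset.sum_ite_eq]
    simp [two_mul]
  have hfoster : ∑ e : G.E, G.res (G.fst e) (G.snd e) = (Fintype.card G.V : ℝ) - 1 := by
    unfold Multigraph.res
    rw [← Finset.sum_div]
    rw [show ∑ e : G.E, (G.kappa2Sep (G.fst e) (G.snd e) : ℝ)
      = ((∑ e : G.E, G.kappa2Sep (G.fst e) (G.snd e) : ℕ) : ℝ) from (Nat.cast_sum _ _).symm]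
    rw [Multigraph.foster_sum]
    rw [Nat.cast_mul]
    rw [Nat.cast_sub hn]
    field_simp
    simp
  unfold Multigraph.mu
  rw [Finset.sum_sub_distrib, ← Finset.mul_sum, hswap, hfoster, Finset.sum_const, Finset.card_univ,
    nsmul_eq_mul, mul_one]
  ring
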